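/- arXiv:2510.12022 — 8 statements merged into one kernel-verified Lean document; each statement's English description precedes it below -/
import Mathlib

section
/- Let a, b, s ∈ ℝ³ with ‖a‖ = 1, ‖b‖ = 1 and ‖s‖ ≤ 1. Then (a·s)² + (b·s)² + (a·b)² − 2(a·b)(a·s)(b·s) ≤ 1. -/
noncomputable section
open scoped ComplexOrder

/-- Euclidean 3-space, the home of Bloch vectors and measurement directions. -/
abbrev E3 := EuclideanSpace ℝ (Fin 3)

/-- The standard inner ℝ product on ℝ³. -/
def dot (a b : E3) : ℝ := inner ℝ a b

/-! The Gram determinant of `a, b, s` is nonnegative, and for unit `a, b` it equals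
`(1 - (a·b)²)‖s‖² - ((a·s)² + (b·s)² - 2(a·b)(a·s)(b·s))`. Bounding `‖s‖² ≤ 1` and
using `(a·b)² ≤ 1` (Cauchy–Schwarz) turns this into the claim. -/

open RealInnerProductSpace

section
variable {F : Type*} [NormedAddCommGroup F] [InnerProductSpace ℝ F]

theorem gram_det_three_nonneg (u v w : F) :
    0 ≤ ‖u‖ ^ 2 * ‖v‖ ^ 2 * ‖w‖ ^ 2 + 2 * ⟪u, v⟫ * ⟪v, w⟫ * ⟪u, w⟫
      - ‖u‖ ^ 2 * ⟪v, w⟫ ^ 2 - ‖v‖ ^ 2 * ⟪u, w⟫ ^ 2 - ‖w‖ ^ 2 * ⟪u, v⟫ ^ 2 := by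
  have h := (Matrix.posSemidef_gram ℝ ![u, v, w]).det_nonneg
  rw [Matrix.det_fin_three] at h
  simp only [Matrix.gram_apply, Matrix.cons_val_zero, Matrix.cons_val_one, Matrix.cons_val_two,
    Matrix.tail_cons, Matrix.head_cons, real_inner_self_eq_norm_sq] at h
  rw [real_inner_comm u v, real_inner_comm u w, real_inner_comm v w] at h
  linear_combination h

theorem inner_sq_add_inner_sq_sub_le_of_norm_eq_one {a b : F} (ha : ‖a‖ = 1) (hb : ‖b‖ = 1)
    (s : F) :
    ⟪a, s⟫ ^ 2 + ⟪b, s⟫ ^ 2 - 2 * ⟪a, b⟫ * ⟪a, s⟫ * ⟪b, s⟫ ≤ (1 - ⟪a, b⟫ ^ 2) * ‖s‖ ^ 2 := by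
  have h := gram_det_three_nonneg a b s
  rw [ha, hb] at h
  linarith

end

/-- Qubit uncertainty relation: for unit vectors a, b (measurement directions) and a
Bloch vector s with ‖s‖ ≤ 1, the expectation values a·s, b·s satisfy
(a·s)² + (b·s)² + (a·b)² − 2(a·b)(a·s)(b·s) ≤ 1. -/
theorem qubit_uncertainty_relation (a b s : E3)
    (ha : ‖a‖ = 1) (hb : ‖b‖ = 1) (hs : ‖s‖ ≤ 1) :
    dot a s ^ 2 + dot b s ^ 2 + dot a b ^ 2
      - 2 * dot a b * dot a s * dot b s ≤ 1 := by
  have hab : dot a b ^ 2 ≤ 1 := by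
    have h := abs_real_inner_le_norm a b
    rw [ha, hb, one_mul] at h
    exact (sq_le_one_iff_abs_le_one _).2 h
  have hs2 : ‖s‖ ^ 2 ≤ 1 := pow_le_one₀ (norm_nonneg s) hs
  calc dot a s ^ 2 + dot b s ^ 2 + dot a b ^ 2 - 2 * dot a b * dot a s * dot b s
      = (dot a s ^ 2 + dot b s ^ 2 - 2 * dot a b * dot a s * dot b s) + dot a b ^ 2 := by ring
    _ ≤ (1 - dot a b ^ 2) * ‖s‖ ^ 2 + dot a b ^ 2 :=
      add_le_add_left (inner_sq_add_inner_sq_sub_le_of_norm_eq_one ha hb s) _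
    _ ≤ (1 - dot a b ^ 2) * 1 + dot a b ^ 2 :=
      add_le_add_left (mul_le_mul_of_nonneg_left hs2 (sub_nonneg.2 hab)) _
    _ = 1 := by ring
end
end

section
/- (Theorem 1, Bloch form.) Let a, b ∈ ℝ³ be unit vectors and let Ω be a set of vectors in ℝ³ each of norm at most 1. Then for every s, s' ∈ Ω one has g₋(a,b,s) ≤ g₊(a,b,s'); equivalently, the supremum over Ω of g₋ is at most the infimum over Ω of g₊. In particular, any family of expectation values {(a·s, b·s) : s ∈ Ω} arising from two fixed projective binary qubit measurements on a set of qubit states must satisfy this constraint. -/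
/-!
For ‖s‖ ≤ 1 the symmetric bilinear form `(u, v) ↦ ⟪u, v⟫ - ⟪u, s⟫ ⟪v, s⟫` is positive
semidefinite, so its Cauchy–Schwarz inequality gives, for unit vectors `a` and `b`,
`|a·b - (a·s)(b·s)| ≤ √(1 - (a·s)²) √(1 - (b·s)²)`. Hence `g₋(a,b,s) ≤ a·b ≤ g₊(a,b,s')`
for any two Bloch vectors `s` and `s'`: the number `a·b` separates the two families.
-/

noncomputable section
open scoped ComplexOrder

/-- g₊(a,b,s) = (a·s)(b·s) + √(1−(a·s)²)·√(1−(b·s)²). -/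
def gPlus (a b s : E3) : ℝ :=
  dot a s * dot b s + Real.sqrt (1 - dot a s ^ 2) * Real.sqrt (1 - dot b s ^ 2)

/-- g₋(a,b,s) = (a·s)(b·s) − √(1−(a·s)²)·√(1−(b·s)²). -/
def gMinus (a b s : E3) : ℝ :=
  dot a s * dot b s - Real.sqrt (1 - dot a s ^ 2) * Real.sqrt (1 - dot b s ^ 2)

section DeflatedInner

open RealInnerProductSpace

variable {E : Type*} [NormedAddCommGroup E] [InnerProductSpace ℝ E]

def deflatedInner (s u v : E) : ℝ := ⟪u, v⟫ - ⟪u, s⟫ * ⟪v, s⟫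

lemma deflatedInner_self (s v : E) : deflatedInner s v v = ‖v‖ ^ 2 - ⟪v, s⟫ ^ 2 := by
  rw [deflatedInner, real_inner_self_eq_norm_sq]
  ring

lemma deflatedInner_self_nonneg {s : E} (hs : ‖s‖ ≤ 1) (v : E) : 0 ≤ deflatedInner s v v := by
  rw [deflatedInner_self, sub_nonneg]
  calc ⟪v, s⟫ ^ 2 = |⟪v, s⟫| ^ 2 := (sq_abs _).symm
    _ ≤ (‖v‖ * ‖s‖) ^ 2 := by gcongr; exact abs_real_inner_le_norm v s
    _ ≤ ‖v‖ ^ 2 := by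
      rw [mul_pow]
      exact mul_le_of_le_one_right (sq_nonneg _) (pow_le_one₀ (norm_nonneg s) hs)

lemma deflatedInner_smul_add_self (s u v : E) (t : ℝ) :
    deflatedInner s (t • u + v) (t • u + v) =
      deflatedInner s u u * (t * t) + 2 * deflatedInner s u v * t + deflatedInner s v v := by
  have huv : ⟪v, u⟫ = ⟪u, v⟫ := real_inner_comm u v
  simp only [deflatedInner, inner_add_left, inner_add_right, inner_smul_left, inner_smul_right,
    RCLike.conj_to_real, huv]
  ring

-- Cauchy–Schwarz: `t ↦ deflatedInner s (t • u + v) (t • u + v)` is a nonnegative quadratic.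
lemma sq_deflatedInner_le {s : E} (hs : ‖s‖ ≤ 1) (u v : E) :
    deflatedInner s u v ^ 2 ≤ deflatedInner s u u * deflatedInner s v v := by
  have h := discrim_le_zero fun t ↦
    (deflatedInner_smul_add_self s u v t).symm ▸ deflatedInner_self_nonneg hs (t • u + v)
  rw [discrim] at h
  linarith

lemma abs_deflatedInner_le {s : E} (hs : ‖s‖ ≤ 1) (u v : E) :
    |deflatedInner s u v| ≤ √(deflatedInner s u u) * √(deflatedInner s v v) := by
  rw [← Real.sqrt_mul (deflatedInner_self_nonneg hs u)]
  exact Real.abs_le_sqrt (sq_deflatedInner_le hs u v)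

end DeflatedInner

lemma abs_dot_sub_dot_mul_dot_le {a b s : E3} (ha : ‖a‖ = 1) (hb : ‖b‖ = 1) (hs : ‖s‖ ≤ 1) :
    |dot a b - dot a s * dot b s| ≤ √(1 - dot a s ^ 2) * √(1 - dot b s ^ 2) := by
  have h := abs_deflatedInner_le hs a b
  rwa [deflatedInner_self, deflatedInner_self, ha, hb, one_pow] at h

lemma gMinus_le_dot {a b s : E3} (ha : ‖a‖ = 1) (hb : ‖b‖ = 1) (hs : ‖s‖ ≤ 1) :
    gMinus a b s ≤ dot a b := by
  have h := (abs_le.mp (abs_dot_sub_dot_mul_dot_le ha hb hs)).1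
  rw [gMinus]
  linarith

lemma dot_le_gPlus {a b s : E3} (ha : ‖a‖ = 1) (hb : ‖b‖ = 1) (hs : ‖s‖ ≤ 1) :
    dot a b ≤ gPlus a b s := by
  have h := (abs_le.mp (abs_dot_sub_dot_mul_dot_le ha hb hs)).2
  rw [gPlus]
  linarith

/-- Theorem 1 (Bloch form): for unit measurement directions a, b and any set Ω of
Bloch vectors (each of norm at most 1), g₋(a,b,s) ≤ g₊(a,b,s') for all s, s' ∈ Ω. -/
theorem theorem1_pvm_criterion (a b : E3) (ha : ‖a‖ = 1) (hb : ‖b‖ = 1)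
    (Ω : Set E3) (hΩ : ∀ s ∈ Ω, ‖s‖ ≤ 1) :
    ∀ s ∈ Ω, ∀ s' ∈ Ω, gMinus a b s ≤ gPlus a b s' :=
  fun s hs s' hs' ↦ (gMinus_le_dot ha hb (hΩ s hs)).trans (dot_le_gPlus ha hb (hΩ s' hs'))
end
end

section
/- (Theorem 1, density-matrix form.) Let a, b ∈ ℝ³ be unit vectors and let ρ, ρ' be qubit density matrices. Set A_ρ = Re(Tr(ρ·σ(a))), B_ρ = Re(Tr(ρ·σ(b))), and similarly A_{ρ'}, B_{ρ'}. Then A_ρ·B_ρ − √(1−A_ρ²)·√(1−B_ρ²) ≤ A_{ρ'}·B_{ρ'} + √(1−A_{ρ'}²)·√(1−B_{ρ'}²). -/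
noncomputable section
open scoped ComplexOrder

/-- σ(a) = a₁σₓ + a₂σ_y + a₃σ_z as an explicit 2×2 complex matrix. -/
def pauli (a : E3) : Matrix (Fin 2) (Fin 2) ℂ :=
  !![(a 2 : ℂ), (a 0 : ℂ) - Complex.I * (a 1 : ℂ);
     (a 0 : ℂ) + Complex.I * (a 1 : ℂ), -(a 2 : ℂ)]

/-!
The Bloch vector r of a qubit state has ‖r‖ ≤ 1 and turns expectation values into inner
products: A = ⟪r, a⟫, B = ⟪r, b⟫. Since ‖r‖ ≤ 1, the symmetric form ⟪x, y⟫ - ⟪r, x⟫⟪r, y⟫ is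
positive semidefinite, and Cauchy–Schwarz for it gives |⟪a, b⟫ - AB| ≤ √(1 - A²)√(1 - B²).
Hence the left-hand side is at most ⟪a, b⟫ for ρ, and the right-hand side at least ⟪a, b⟫ for ρ'.
-/

section InnerProduct

open scoped RealInnerProductSpace

variable {E : Type*} [NormedAddCommGroup E] [InnerProductSpace ℝ E]

lemma inner_sq_le_norm_sq_of_norm_le_one {r : E} (hr : ‖r‖ ≤ 1) (x : E) :
    ⟪r, x⟫ ^ 2 ≤ ‖x‖ ^ 2 := by
  have hrx : |⟪r, x⟫| ≤ ‖x‖ :=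
    (abs_real_inner_le_norm r x).trans (mul_le_of_le_one_left (norm_nonneg x) hr)
  exact sq_le_sq' (abs_le.mp hrx).1 (abs_le.mp hrx).2

lemma abs_inner_sub_inner_mul_inner_le {r : E} (hr : ‖r‖ ≤ 1) (x y : E) :
    |⟪x, y⟫ - ⟪r, x⟫ * ⟪r, y⟫| ≤ √(‖x‖ ^ 2 - ⟪r, x⟫ ^ 2) * √(‖y‖ ^ 2 - ⟪r, y⟫ ^ 2) := by
  set Q : E → E → ℝ := fun u v ↦ ⟪u, v⟫ - ⟪r, u⟫ * ⟪r, v⟫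
  have hQ_nonneg : ∀ z, 0 ≤ Q z z := fun z ↦ by
    simp only [Q, real_inner_self_eq_norm_sq]
    linarith [inner_sq_le_norm_sq_of_norm_le_one hr z, sq ⟪r, z⟫]
  have hquad : ∀ t : ℝ, 0 ≤ Q y y * (t * t) + 2 * Q x y * t + Q x x := fun t ↦ by
    have := hQ_nonneg (x + t • y)
    simp only [Q, inner_add_left, inner_add_right, inner_smul_left, inner_smul_right,
      real_inner_comm x y, RCLike.conj_to_real] at this ⊢
    linarith
  have hdisc := discrim_le_zero hquad
  rw [discrim] at hdisc
  rw [← Real.sqrt_mul (sub_nonneg.mpr (inner_sq_le_norm_sq_of_norm_le_one hr x))]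
  apply Real.abs_le_sqrt
  simp only [Q, real_inner_self_eq_norm_sq] at hdisc
  nlinarith

end InnerProduct

section BlochVector

variable {ρ : Matrix (Fin 2) (Fin 2) ℂ}

/-- Read off from ρ = (1 + σ(r)) / 2. -/
def blochVector (ρ : Matrix (Fin 2) (Fin 2) ℂ) : E3 :=
  !₂[2 * (ρ 0 1).re, -2 * (ρ 0 1).im, (ρ 0 0).re - (ρ 1 1).re]

lemma re_trace_mul_pauli (hρ : ρ.IsHermitian) (a : E3) :
    (ρ * pauli a).trace.re = inner ℝ (blochVector ρ) a := by
  have h10 : ρ 1 0 = starRingEnd ℂ (ρ 0 1) := by simpa using (hρ.apply 1 0).symm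
  simp only [pauli, blochVector, Matrix.trace_fin_two, Matrix.mul_apply, Fin.sum_univ_two,
    Matrix.of_apply, Matrix.cons_val', Matrix.cons_val_zero, Matrix.cons_val_one,
    Matrix.cons_val_fin_one, Matrix.cons_val, h10, Complex.add_re, Complex.add_im,
    Complex.sub_re, Complex.sub_im, Complex.mul_re, Complex.mul_im, Complex.neg_re,
    Complex.neg_im, Complex.ofReal_re, Complex.ofReal_im, Complex.I_re, Complex.I_im,
    Complex.conj_re, Complex.conj_im,
    PiLp.inner_apply, RCLike.inner_apply, Real.ringHom_apply, Fin.sum_univ_three]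
  ring

lemma norm_blochVector_le_one (hρ : ρ.PosSemidef) (hρtr : ρ.trace = 1) :
    ‖blochVector ρ‖ ≤ 1 := by
  have h10 : ρ 1 0 = starRingEnd ℂ (ρ 0 1) := by simpa using (hρ.isHermitian.apply 1 0).symm
  have h00 : (ρ 0 0).im = 0 := Complex.conj_eq_iff_im.mp (by simpa using hρ.isHermitian.apply 0 0)
  have htr : (ρ 0 0).re + (ρ 1 1).re = 1 := by
    simpa [Matrix.trace_fin_two] using congrArg Complex.re hρtr
  have hdet : 0 ≤ (ρ 0 0).re * (ρ 1 1).re - ((ρ 0 1).re ^ 2 + (ρ 0 1).im ^ 2) := by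
    have := (Complex.nonneg_iff.mp hρ.det_nonneg).1
    simp only [Matrix.det_fin_two, h10, Complex.sub_re, Complex.mul_re, Complex.conj_re,
      Complex.conj_im, h00] at this
    linarith
  -- ‖r‖² = (tr ρ)² - 4 det ρ
  have hnorm : ‖blochVector ρ‖ ^ 2 ≤ 1 := by
    simp only [EuclideanSpace.real_norm_sq_eq, Fin.sum_univ_three, blochVector,
      Matrix.cons_val_zero, Matrix.cons_val_one, Matrix.cons_val]
    nlinarith
  exact (sq_le_one_iff₀ (norm_nonneg _)).mp hnorm

end BlochVector

/-- Theorem 1 (density-matrix form): for unit vectors a, b and qubit density matrices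
ρ, ρ', with A_ρ = Re Tr(ρ σ(a)), B_ρ = Re Tr(ρ σ(b)), we have
A_ρB_ρ − √(1−A_ρ²)√(1−B_ρ²) ≤ A_ρ'B_ρ' + √(1−A_ρ'²)√(1−B_ρ'²). -/
theorem theorem1_density_matrix_form (a b : E3) (ha : ‖a‖ = 1) (hb : ‖b‖ = 1)
    (ρ ρ' : Matrix (Fin 2) (Fin 2) ℂ)
    (hρ : ρ.PosSemidef) (hρtr : ρ.trace = 1)
    (hρ' : ρ'.PosSemidef) (hρ'tr : ρ'.trace = 1) :
    (ρ * pauli a).trace.re * (ρ * pauli b).trace.re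
        - Real.sqrt (1 - (ρ * pauli a).trace.re ^ 2)
          * Real.sqrt (1 - (ρ * pauli b).trace.re ^ 2)
      ≤ (ρ' * pauli a).trace.re * (ρ' * pauli b).trace.re
        + Real.sqrt (1 - (ρ' * pauli a).trace.re ^ 2)
          * Real.sqrt (1 - (ρ' * pauli b).trace.re ^ 2) := by
  obtain ⟨hρ_le, -⟩ :=
    abs_le.mp (abs_inner_sub_inner_mul_inner_le (norm_blochVector_le_one hρ hρtr) a b)
  obtain ⟨-, hρ'_ge⟩ :=
    abs_le.mp (abs_inner_sub_inner_mul_inner_le (norm_blochVector_le_one hρ' hρ'tr) a b)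
  rw [ha, hb, one_pow] at hρ_le hρ'_ge
  simp only [re_trace_mul_pauli hρ.isHermitian, re_trace_mul_pauli hρ'.isHermitian]
  linarith
end
end

section
/- Let a_i, a_j ∈ ℝ³ be unit vectors and let (r_i, r'_i), (r_j, r'_j) be real pairs with r'_l ≥ 0 and |r_l| + r'_l ≤ 1 for l = i, j. For s ∈ ℝ³ set A_l(s) = r'_l·(a_l·s) + r_l. Then for every s ∈ ℝ³ with ‖s‖ ≤ 1: (A_i(s)−r_i)(A_j(s)−r_j) − √(r'_i² − (A_i(s)−r_i)²)·√(r'_j² − (A_j(s)−r_j)²) ≤ (a_i·a_j)·r'_i·r'_j ≤ (A_i(s)−r_i)(A_j(s)−r_j) + √(r'_i² − (A_i(s)−r_i)²)·√(r'_j² − (A_j(s)−r_j)²). -/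
/-!
Write `x = a_i·s`, `y = a_j·s`, `c = a_i·a_j`. Since `A_l(s) - r_l = r'_l (a_l·s)`, the claim is
`r'_i r'_j |c - x y| ≤ r'_i r'_j √(1 - x²) √(1 - y²)`, i.e. `(1 - x²)(1 - y²) - (c - x y)² ≥ 0`.
This quantity equals `(1 - c²)(1 - ‖s‖²)` plus the Gram determinant of `a_i, a_j, s`; both terms
are nonnegative, the second by Cauchy–Schwarz for the components of `a_j` and `s` orthogonal to
`a_i`.
-/

noncomputable section
open scoped ComplexOrder

/-- Expectation value of the POVM observable A = r'·(a·σ) + r·𝟙 on the qubit state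
with Bloch vector s. -/
def Aexp (r' r : ℝ) (a s : E3) : ℝ := r' * dot a s + r

open RealInnerProductSpace

section InnerProductSpace

variable {F : Type*} [NormedAddCommGroup F] [InnerProductSpace ℝ F]

theorem sq_inner_sub_inner_mul_inner_le {a : F} (ha : ‖a‖ = 1) (b s : F) :
    (⟪b, s⟫ - ⟪a, b⟫ * ⟪a, s⟫) ^ 2 ≤ (‖b‖ ^ 2 - ⟪a, b⟫ ^ 2) * (‖s‖ ^ 2 - ⟪a, s⟫ ^ 2) := by
  have haa : ⟪a, a⟫ = 1 := by rw [real_inner_self_eq_norm_sq, ha, one_pow]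
  have hcs := real_inner_mul_inner_self_le (b - ⟪a, b⟫ • a) (s - ⟪a, s⟫ • a)
  simp only [inner_sub_left, inner_sub_right, real_inner_smul_left, real_inner_smul_right,
    real_inner_self_eq_norm_sq b, real_inner_self_eq_norm_sq s, haa, real_inner_comm a] at hcs
  linarith

theorem abs_inner_sub_inner_mul_inner_le_s5 {a b s : F} (ha : ‖a‖ = 1) (hb : ‖b‖ = 1)
    (hs : ‖s‖ ≤ 1) :
    |⟪a, b⟫ - ⟪a, s⟫ * ⟪b, s⟫| ≤ √(1 - ⟪a, s⟫ ^ 2) * √(1 - ⟪b, s⟫ ^ 2) := by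
  have sq_inner_le {u : F} (hu : ‖u‖ = 1) (v : F) (hv : ‖v‖ ≤ 1) : ⟪u, v⟫ ^ 2 ≤ 1 := by
    refine sq_le_one_iff_abs_le_one _ |>.mpr ?_
    calc |⟪u, v⟫| ≤ ‖u‖ * ‖v‖ := abs_real_inner_le_norm u v
      _ ≤ 1 := by rw [hu, one_mul]; exact hv
  have hgram := sq_inner_sub_inner_mul_inner_le ha b s
  rw [hb, one_pow] at hgram
  have hc := sq_inner_le ha b hb.le
  have hm : ‖s‖ ^ 2 ≤ 1 := pow_le_one₀ (norm_nonneg s) hs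
  -- `(1 - x²)(1 - y²) - (c - x y)² = (1 - c²)(1 - ‖s‖²) + ((1 - c²)(‖s‖² - x²) - (y - c x)²)`
  have hkey : (⟪a, b⟫ - ⟪a, s⟫ * ⟪b, s⟫) ^ 2 ≤ (1 - ⟪a, s⟫ ^ 2) * (1 - ⟪b, s⟫ ^ 2) := by
    linarith [mul_nonneg (sub_nonneg.mpr hc) (sub_nonneg.mpr hm)]
  rw [← Real.sqrt_mul (sub_nonneg.mpr (sq_inner_le ha s hs))]
  exact Real.abs_le_sqrt hkey

end InnerProductSpace

theorem sqrt_sq_sub_mul_sq {r : ℝ} (hr : 0 ≤ r) (x : ℝ) :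
    √(r ^ 2 - (r * x) ^ 2) = r * √(1 - x ^ 2) := by
  rw [show r ^ 2 - (r * x) ^ 2 = r ^ 2 * (1 - x ^ 2) by ring, Real.sqrt_mul (sq_nonneg r),
    Real.sqrt_sq hr]

theorem abs_mul_mul_sub_le_of_abs_sub_le {c x y r r' : ℝ}
    (h : |c - x * y| ≤ √(1 - x ^ 2) * √(1 - y ^ 2)) (hr : 0 ≤ r) (hr' : 0 ≤ r') :
    |c * r * r' - r * x * (r' * y)| ≤ √(r ^ 2 - (r * x) ^ 2) * √(r' ^ 2 - (r' * y) ^ 2) := by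
  have hrr' : 0 ≤ r * r' := mul_nonneg hr hr'
  calc |c * r * r' - r * x * (r' * y)| = r * r' * |c - x * y| := by
        rw [← abs_of_nonneg hrr', ← abs_mul]; ring_nf
    _ ≤ r * r' * (√(1 - x ^ 2) * √(1 - y ^ 2)) := mul_le_mul_of_nonneg_left h hrr'
    _ = √(r ^ 2 - (r * x) ^ 2) * √(r' ^ 2 - (r' * y) ^ 2) := by
        rw [sqrt_sq_sub_mul_sq hr, sqrt_sq_sub_mul_sq hr']; ring

theorem Aexp_sub (r' r : ℝ) (a s : E3) : Aexp r' r a s - r = r' * dot a s := by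
  rw [Aexp, add_sub_cancel_right]

theorem inference_inequality_general (ai aj : E3) (hai : ‖ai‖ = 1) (haj : ‖aj‖ = 1)
    (ri ri' rj rj' : ℝ) (hi' : 0 ≤ ri')
    (hj' : 0 ≤ rj') :
    ∀ s : E3, ‖s‖ ≤ 1 →
      (Aexp ri' ri ai s - ri) * (Aexp rj' rj aj s - rj)
          - Real.sqrt (ri' ^ 2 - (Aexp ri' ri ai s - ri) ^ 2)
            * Real.sqrt (rj' ^ 2 - (Aexp rj' rj aj s - rj) ^ 2)
        ≤ dot ai aj * ri' * rj' ∧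
      dot ai aj * ri' * rj'
        ≤ (Aexp ri' ri ai s - ri) * (Aexp rj' rj aj s - rj)
          + Real.sqrt (ri' ^ 2 - (Aexp ri' ri ai s - ri) ^ 2)
            * Real.sqrt (rj' ^ 2 - (Aexp rj' rj aj s - rj) ^ 2) := by
  intro s hs
  simp only [Aexp_sub, dot]
  obtain ⟨hlower, hupper⟩ := abs_le.mp <| abs_mul_mul_sub_le_of_abs_sub_le
    (abs_inner_sub_inner_mul_inner_le_s5 hai haj hs) hi' hj'
  exact ⟨by linarith, by linarith⟩

/-- The key inference inequality (Eq. (4)): the quantity (a_i·a_j)·r'_i·r'_j is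
sandwiched between (A_i−r_i)(A_j−r_j) ∓ √(r'_i²−(A_i−r_i)²)·√(r'_j²−(A_j−r_j)²). -/
theorem inference_inequality (ai aj : E3) (hai : ‖ai‖ = 1) (haj : ‖aj‖ = 1)
    (ri ri' rj rj' : ℝ) (hi' : 0 ≤ ri') (hi : |ri| + ri' ≤ 1)
    (hj' : 0 ≤ rj') (hj : |rj| + rj' ≤ 1) :
    ∀ s : E3, ‖s‖ ≤ 1 →
      (Aexp ri' ri ai s - ri) * (Aexp rj' rj aj s - rj)
          - Real.sqrt (ri' ^ 2 - (Aexp ri' ri ai s - ri) ^ 2)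
            * Real.sqrt (rj' ^ 2 - (Aexp rj' rj aj s - rj) ^ 2)
        ≤ dot ai aj * ri' * rj' ∧
      dot ai aj * ri' * rj'
        ≤ (Aexp ri' ri ai s - ri) * (Aexp rj' rj aj s - rj)
          + Real.sqrt (ri' ^ 2 - (Aexp ri' ri ai s - ri) ^ 2)
            * Real.sqrt (rj' ^ 2 - (Aexp rj' rj aj s - rj) ^ 2) :=
  inference_inequality_general ai aj hai haj ri ri' rj rj' hi' hj'
end
end

section
/- There do not exist unit vectors a₀, a₁ ∈ ℝ³ and vectors s₀, s₁ ∈ ℝ³ with ‖s₀‖ ≤ 1 and ‖s₁‖ ≤ 1 such that a₀·s₀ = 1, a₁·s₀ = 1, a₀·s₁ = 1 and a₁·s₁ = −1. In other words, the correlation with expectation values A₀ = A₁ = 1 on one state and A₀ = 1, A₁ = −1 on another state cannot be generated by two projective binary measurements on qubit states. -/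
/-! An expectation value `a · s = 1` with `‖a‖, ‖s‖ ≤ 1` is the equality case of Cauchy–Schwarz
and forces `a = s`. Hence `a₀ = s₀ = a₁`, so `a₁ · s₁ = a₀ · s₁ = 1`, not `-1`. -/

noncomputable section
open scoped ComplexOrder

theorem eq_of_inner_eq_one_of_norm_le_one {F : Type*} [NormedAddCommGroup F]
    [InnerProductSpace ℝ F] {a s : F} (ha : ‖a‖ ≤ 1) (hs : ‖s‖ ≤ 1) (h : inner ℝ a s = 1) :
    a = s := by
  have hsq : ‖a - s‖ ^ 2 ≤ 0 := by
    rw [norm_sub_sq_real, h]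
    nlinarith [norm_nonneg a, norm_nonneg s]
  exact sub_eq_zero.mp (norm_eq_zero.mp (pow_eq_zero_iff two_ne_zero |>.mp
    (le_antisymm hsq (sq_nonneg _))))

/-- The correlation A₀ = A₁ = 1 on one state and A₀ = 1, A₁ = −1 on another cannot be
generated by two projective binary measurements on qubit states. -/
theorem no_pvm_realization :
    ¬ ∃ (a₀ a₁ s₀ s₁ : E3),
        ‖a₀‖ = 1 ∧ ‖a₁‖ = 1 ∧ ‖s₀‖ ≤ 1 ∧ ‖s₁‖ ≤ 1 ∧
        dot a₀ s₀ = 1 ∧ dot a₁ s₀ = 1 ∧ dot a₀ s₁ = 1 ∧ dot a₁ s₁ = -1 := by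
  rintro ⟨a₀, a₁, s₀, s₁, ha₀, ha₁, hs₀, -, h₀₀, h₁₀, h₀₁, h₁₁⟩
  have ha₀s₀ : a₀ = s₀ := eq_of_inner_eq_one_of_norm_le_one ha₀.le hs₀ h₀₀
  have ha₁s₀ : a₁ = s₀ := eq_of_inner_eq_one_of_norm_le_one ha₁.le hs₀ h₁₀
  have ha₁a₀ : a₁ = a₀ := ha₁s₀.trans ha₀s₀.symm
  rw [ha₁a₀, h₀₁] at h₁₁
  norm_num at h₁₁
end
end

section
/- There exist real pairs (r₀, r'₀), (r₁, r'₁) with r'_l ≥ 0 and |r_l| + r'_l ≤ 1, unit vectors a₀, a₁ ∈ ℝ³, and vectors s₀, s₁ ∈ ℝ³ with ‖s₀‖ ≤ 1 and ‖s₁‖ ≤ 1, such that r'₀·(a₀·s₀) + r₀ = 1, r'₁·(a₁·s₀) + r₁ = 1, r'₀·(a₀·s₁) + r₀ = 1 and r'₁·(a₁·s₁) + r₁ = −1 (for instance r₀ = 1, r'₀ = 0, r₁ = 0, r'₁ = 1, s₀ = a₁, s₁ = −a₁, corresponding to the POVM observable A₀ = 𝟙 and the projective observable A₁ = σ_z on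 the states |0⟩ and |1⟩). -/
noncomputable section
open scoped ComplexOrder

lemma dot_self_of_norm_eq_one {a : E3} (ha : ‖a‖ = 1) : dot a a = 1 := by
  rw [dot, real_inner_self_eq_norm_sq, ha, one_pow]

lemma dot_neg_right (a b : E3) : dot a (-b) = -dot a b :=
  inner_neg_right a b

/-- The same correlation is realizable by general binary qubit POVMs: there exist
POVM parameters, unit measurement directions and Bloch vectors realizing
A₀ = A₁ = 1 on one state and A₀ = 1, A₁ = −1 on the other. -/
theorem povm_realization_exists :
    ∃ (r₀ r₀' r₁ r₁' : ℝ) (a₀ a₁ s₀ s₁ : E3),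
        0 ≤ r₀' ∧ |r₀| + r₀' ≤ 1 ∧
        0 ≤ r₁' ∧ |r₁| + r₁' ≤ 1 ∧
        ‖a₀‖ = 1 ∧ ‖a₁‖ = 1 ∧ ‖s₀‖ ≤ 1 ∧ ‖s₁‖ ≤ 1 ∧
        r₀' * dot a₀ s₀ + r₀ = 1 ∧ r₁' * dot a₁ s₀ + r₁ = 1 ∧
        r₀' * dot a₀ s₁ + r₀ = 1 ∧ r₁' * dot a₁ s₁ + r₁ = -1 := by
  obtain ⟨a, ha⟩ := exists_norm_eq E3 zero_le_one
  have haa : dot a a = 1 := dot_self_of_norm_eq_one ha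
  -- A₀ = 𝟙 and the projective A₁ = a·σ, on the pure states with Bloch vectors ±a.
  refine ⟨1, 0, 0, 1, a, a, a, -a, le_rfl, by norm_num, zero_le_one, by norm_num,
    ha, ha, ha.le, (norm_neg a).trans_le ha.le, by ring, ?_, by ring, ?_⟩
  · rw [haa]; ring
  · rw [dot_neg_right, haa]; ring
end
end

section
/- (Minimal device-referring protocol.) Let (r₀, r'₀), (r₁, r'₁) be real pairs with r'_l ≥ 0 and |r_l| + r'_l ≤ 1, let a₀, a₁ ∈ ℝ³ be unit vectors, and let s₀, s₁ ∈ ℝ³ satisfy ‖s₀‖ ≤ 1 and ‖s₁‖ ≤ 1. If r'₀·(a₀·s₀) + r₀ = 1, r'₀·(a₀·s₁) + r₀ = 1, r'₁·(a₁·s₀) + r₁ = 1, and r'₁·(a₁·s₁) + r₁ = −1, then necessarily r'₀ = 0, r₀ = 1, r'₁ = 1, r₁ = 0, s₀ = a₁ and s₁ = −a₁; that is, the first observable is the identity, the second is projective, and the two states are the eigenvectors of the second observable. -/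
/-! The expectations `r' x + r` of an observable with `r' ≥ 0` and `|r| + r' ≤ 1` lie in `[-1, 1]`
whenever `|x| ≤ 1`. Reaching both extremes `1` and `-1` forces `r' = 1` and `r = 0`, and then the
Bloch vectors must saturate Cauchy–Schwarz, so `s₀ = a₁` and `s₁ = -a₁`. Since `s₁ = -s₀`, the two
expectations of the first observable average to `r₀`, which is therefore `1`, leaving `r₀' = 0`. -/

noncomputable section
open scoped ComplexOrder

section InnerProductSpace

variable {F : Type*} [NormedAddCommGroup F] [InnerProductSpace ℝ F] {a s : F}

open RealInnerProductSpace

theorem abs_real_inner_le_one_of_norm_le_one (ha : ‖a‖ = 1) (hs : ‖s‖ ≤ 1) : |⟪a, s⟫| ≤ 1 :=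
  (abs_real_inner_le_norm a s).trans (by rw [ha, one_mul]; exact hs)

theorem eq_of_real_inner_eq_one (ha : ‖a‖ = 1) (hs : ‖s‖ ≤ 1) (h : ⟪a, s⟫ = 1) : s = a := by
  have hs_one : ‖s‖ = 1 := le_antisymm hs <| by
    simpa [ha, h] using real_inner_le_norm a s
  exact ((inner_eq_one_iff_of_norm_eq_one ha hs_one).mp h).symm

end InnerProductSpace

theorem sharp_of_mul_add_eq_one_of_mul_add_eq_neg_one {r r' x y : ℝ} (hr' : 0 ≤ r')
    (hr : |r| + r' ≤ 1) (hx : |x| ≤ 1) (hy : |y| ≤ 1)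
    (hx_one : r' * x + r = 1) (hy_neg_one : r' * y + r = -1) :
    r' = 1 ∧ r = 0 ∧ x = 1 ∧ y = -1 := by
  obtain ⟨-, hx_le⟩ := abs_le.mp hx
  obtain ⟨hy_ge, -⟩ := abs_le.mp hy
  have hr'_ge : 1 ≤ r' := by
    nlinarith [mul_le_mul_of_nonneg_left (show x - y ≤ 2 by linarith) hr']
  have hr'_eq : r' = 1 := by linarith [abs_nonneg r]
  have hr_eq : r = 0 := abs_eq_zero.mp (by linarith [abs_nonneg r])
  subst hr'_eq hr_eq
  exact ⟨rfl, rfl, by linarith, by linarith⟩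

theorem minimal_device_referring_general
    (r₀ r₀' r₁ r₁' : ℝ) (a₀ a₁ s₀ s₁ : E3)
    (h₀' : 0 ≤ r₀') (h₀ : |r₀| + r₀' ≤ 1)
    (h₁' : 0 ≤ r₁') (h₁ : |r₁| + r₁' ≤ 1)
    (ha₁ : ‖a₁‖ = 1) (hs₀ : ‖s₀‖ ≤ 1) (hs₁ : ‖s₁‖ ≤ 1)
    (e₀₀ : r₀' * dot a₀ s₀ + r₀ = 1) (e₀₁ : r₀' * dot a₀ s₁ + r₀ = 1)
    (e₁₀ : r₁' * dot a₁ s₀ + r₁ = 1) (e₁₁ : r₁' * dot a₁ s₁ + r₁ = -1) :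
    r₀' = 0 ∧ r₀ = 1 ∧ r₁' = 1 ∧ r₁ = 0 ∧ s₀ = a₁ ∧ s₁ = -a₁ := by
  obtain ⟨hr₁', hr₁, hd₀, hd₁⟩ := sharp_of_mul_add_eq_one_of_mul_add_eq_neg_one h₁' h₁
    (abs_real_inner_le_one_of_norm_le_one ha₁ hs₀)
    (abs_real_inner_le_one_of_norm_le_one ha₁ hs₁) e₁₀ e₁₁
  have hs₀_eq : s₀ = a₁ := eq_of_real_inner_eq_one ha₁ hs₀ hd₀
  have hs₁_eq : s₁ = -a₁ := neg_eq_iff_eq_neg.mp <|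
    eq_of_real_inner_eq_one ha₁ (by rwa [norm_neg]) (by rw [inner_neg_right, hd₁, neg_neg])
  have hd_neg : dot a₀ s₁ = -dot a₀ s₀ := by
    rw [hs₀_eq, hs₁_eq, dot, dot, inner_neg_right]
  have hr₀ : r₀ = 1 := by
    rw [hd_neg, mul_neg] at e₀₁
    linarith
  have hr₀' : r₀' = 0 := by
    rw [hr₀, abs_one] at h₀
    linarith
  exact ⟨hr₀', hr₀, hr₁', hr₁, hs₀_eq, hs₁_eq⟩

/-- Minimal device-referring protocol: the correlation A₀ = A₁ = 1 on one state and
A₀ = 1, A₁ = −1 on another uniquely determines the devices: A₀ = 𝟙 (r'₀ = 0, r₀ = 1),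
A₁ is projective (r'₁ = 1, r₁ = 0), and the states are the eigenvectors of A₁. -/
theorem minimal_device_referring
    (r₀ r₀' r₁ r₁' : ℝ) (a₀ a₁ s₀ s₁ : E3)
    (h₀' : 0 ≤ r₀') (h₀ : |r₀| + r₀' ≤ 1)
    (h₁' : 0 ≤ r₁') (h₁ : |r₁| + r₁' ≤ 1)
    (ha₀ : ‖a₀‖ = 1) (ha₁ : ‖a₁‖ = 1) (hs₀ : ‖s₀‖ ≤ 1) (hs₁ : ‖s₁‖ ≤ 1)
    (e₀₀ : r₀' * dot a₀ s₀ + r₀ = 1) (e₀₁ : r₀' * dot a₀ s₁ + r₀ = 1)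
    (e₁₀ : r₁' * dot a₁ s₀ + r₁ = 1) (e₁₁ : r₁' * dot a₁ s₁ + r₁ = -1) :
    r₀' = 0 ∧ r₀ = 1 ∧ r₁' = 1 ∧ r₁ = 0 ∧ s₀ = a₁ ∧ s₁ = -a₁ :=
  minimal_device_referring_general r₀ r₀' r₁ r₁' a₀ a₁ s₀ s₁ h₀' h₀ h₁' h₁ ha₁ hs₀ hs₁ e₀₀ e₀₁ e₁₀
    e₁₁
end
end

section
/- (Separability criterion underlying the optimized NPA test.) Let H be a finite index set, p : H → ℝ with p_h ≥ 0, let ρ_h be n×n complex positive semidefinite matrices and σ_h be m×m complex positive semidefinite matrices, and set ρ = Σ_h p_h · (ρ_h ⊗ σ_h) (Kronecker product). Let O : ι → Matrix (Fin n) (Fin n) ℂ and O' : κ → Matrix (Fin m) (Fin m) ℂ be finite families of matrices. Then the real matrix Γ indexed by ι × κ with entries Γ_{(e,f),(e',f')} = (1/4)·Re( Tr[ ρ · ((O_e†·O_{e'} + O_{e'}†·O_e) ⊗ (O'_f†·O'_{f'} + O'_{f'}†·O'_f)) ] ) is positive semidefinite. -/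
noncomputable section
open scoped ComplexOrder
open Matrix

open Kronecker

/-!
For a product state the symmetrized moment matrix factorizes: since `ρ_h` and `σ_h` are
Hermitian, `Tr[ρ_h (Aᴴ B + Bᴴ A)] = 2 Re Tr[ρ_h Aᴴ B]`, and the trace of a Kronecker product is
the product of the traces, so `Γ = Σ_h p_h Γ_h ⊗ Γ'_h` with `Γ_h = (Re Tr[ρ_h O_eᴴ O_e'])_{e,e'}`.
Each `Γ_h` is the real Gram matrix of the `O_e` for the semi-inner product
`⟪A, B⟫ = Re Tr[B ρ_h Aᴴ]`, hence positive semidefinite, and positive semidefiniteness is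
preserved by Kronecker products, nonnegative scaling and sums.
-/

namespace Matrix

variable {n ι : Type*} [Fintype n]

lemma IsHermitian.star_trace_mul_conjTranspose_mul {R : Type*} [CommSemiring R] [StarRing R]
    {ρ : Matrix n n R} (hρ : ρ.IsHermitian) (A B : Matrix n n R) :
    star (ρ * (Aᴴ * B)).trace = (ρ * (Bᴴ * A)).trace := by
  rw [← trace_conjTranspose, conjTranspose_mul, conjTranspose_mul, conjTranspose_conjTranspose,
    hρ.eq, trace_mul_comm]

lemma trace_sum_smul_kronecker_mul_kronecker {R H m : Type*} [CommSemiring R] [Fintype m]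
    (s : Finset H) (c : H → R) (A : H → Matrix n n R) (B : H → Matrix m m R)
    (X : Matrix n n R) (Y : Matrix m m R) :
    ((∑ h ∈ s, c h • (A h ⊗ₖ B h)) * (X ⊗ₖ Y)).trace =
      ∑ h ∈ s, c h * ((A h * X).trace * (B h * Y).trace) := by
  simp only [Finset.sum_mul, trace_sum, smul_mul, trace_smul, ← mul_kronecker_mul,
    trace_kronecker, smul_eq_mul]

variable {𝕜 : Type*} [RCLike 𝕜]

lemma IsHermitian.trace_mul_conjTranspose_mul_add_eq_two_mul_re {ρ : Matrix n n 𝕜}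
    (hρ : ρ.IsHermitian) (A B : Matrix n n 𝕜) :
    (ρ * (Aᴴ * B + Bᴴ * A)).trace = 2 * (RCLike.re (ρ * (Aᴴ * B)).trace : 𝕜) := by
  rw [mul_add, trace_add, ← hρ.star_trace_mul_conjTranspose_mul A B, RCLike.star_def,
    RCLike.add_conj]

def momentMatrix (ρ : Matrix n n 𝕜) (O : ι → Matrix n n 𝕜) : Matrix ι ι ℝ :=
  of fun e e' => RCLike.re (ρ * ((O e)ᴴ * O e')).trace

theorem posSemidef_momentMatrix [Finite ι] {ρ : Matrix n n 𝕜} (hρ : ρ.PosSemidef)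
    (O : ι → Matrix n n 𝕜) : (momentMatrix ρ O).PosSemidef := by
  let := ρ.toMatrixSeminormedAddCommGroup hρ
  let := ρ.toMatrixInnerProductSpace hρ
  let : InnerProductSpace ℝ (Matrix n n 𝕜) := .rclikeToReal 𝕜 _
  have momentMatrix_eq_gram : momentMatrix ρ O = gram ℝ O := by
    ext e e'
    rw [gram_apply, real_inner_eq_re_inner 𝕜]
    change RCLike.re _ = RCLike.re (O e' * ρ * (O e)ᴴ).trace
    rw [trace_mul_cycle, trace_mul_comm ((O e)ᴴ * O e')]
  rw [momentMatrix_eq_gram]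
  exact posSemidef_gram ℝ O

def symmetrizedMomentMatrix {m κ : Type*} [Fintype m] (ρ : Matrix (n × m) (n × m) 𝕜)
    (O : ι → Matrix n n 𝕜) (O' : κ → Matrix m m 𝕜) : Matrix (ι × κ) (ι × κ) ℝ :=
  of fun ef ef' => (1 / 4 : ℝ) * RCLike.re (ρ * (((O ef.1)ᴴ * O ef'.1 + (O ef'.1)ᴴ * O ef.1) ⊗ₖ
    ((O' ef.2)ᴴ * O' ef'.2 + (O' ef'.2)ᴴ * O' ef.2))).trace

lemma symmetrizedMomentMatrix_sum_smul_kronecker {m κ H : Type*} [Fintype m] (s : Finset H)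
    (c : H → ℝ) {A : H → Matrix n n 𝕜} {B : H → Matrix m m 𝕜} (hA : ∀ h, (A h).IsHermitian)
    (hB : ∀ h, (B h).IsHermitian) (O : ι → Matrix n n 𝕜) (O' : κ → Matrix m m 𝕜) :
    symmetrizedMomentMatrix (∑ h ∈ s, (c h : 𝕜) • (A h ⊗ₖ B h)) O O' =
      ∑ h ∈ s, c h • (momentMatrix (A h) O ⊗ₖ momentMatrix (B h) O') := by
  ext ⟨e, f⟩ ⟨e', f'⟩
  simp only [symmetrizedMomentMatrix, momentMatrix, of_apply, sum_apply, smul_apply,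
    kroneckerMap_apply, smul_eq_mul, trace_sum_smul_kronecker_mul_kronecker,
    (hA _).trace_mul_conjTranspose_mul_add_eq_two_mul_re,
    (hB _).trace_mul_conjTranspose_mul_add_eq_two_mul_re, map_sum, Finset.mul_sum]
  refine Finset.sum_congr rfl fun h _ => ?_
  simp only [RCLike.mul_re, RCLike.mul_im, RCLike.ofReal_re, RCLike.ofReal_im, RCLike.ofNat_re,
    RCLike.ofNat_im]
  ring

end Matrix

/-- Separability criterion underlying the optimized NPA test: for a separable state
ρ = Σ_h p_h ρ_h ⊗ σ_h, the real symmetrized moment matrix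
Γ_{(e,f),(e',f')} = ¼ Re Tr[ρ ((O_e†O_e' + O_e'†O_e) ⊗ (O'_f†O'_f' + O'_f'†O'_f))]
is positive semidefinite. -/
theorem separable_symmetrized_moment_matrix_posSemidef
    {n m : ℕ} {H ι κ : Type*} [Fintype H] [Fintype ι] [Fintype κ]
    (p : H → ℝ) (hp : ∀ h, 0 ≤ p h)
    (ρh : H → Matrix (Fin n) (Fin n) ℂ) (σh : H → Matrix (Fin m) (Fin m) ℂ)
    (hρh : ∀ h, (ρh h).PosSemidef) (hσh : ∀ h, (σh h).PosSemidef)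
    (O : ι → Matrix (Fin n) (Fin n) ℂ) (O' : κ → Matrix (Fin m) (Fin m) ℂ) :
    (Matrix.of fun ef ef' : ι × κ =>
        (1 / 4 : ℝ) *
          ((∑ h, (p h : ℂ) • (ρh h ⊗ₖ σh h)) *
            (((O ef.1)ᴴ * O ef'.1 + (O ef'.1)ᴴ * O ef.1) ⊗ₖ
              ((O' ef.2)ᴴ * O' ef'.2 + (O' ef'.2)ᴴ * O' ef.2))).trace.re
      : Matrix (ι × κ) (ι × κ) ℝ).PosSemidef := by
  have hsum := posSemidef_sum Finset.univ fun h _ =>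
    ((posSemidef_momentMatrix (hρh h) O).kronecker (posSemidef_momentMatrix (hσh h) O')).smul
      (hp h)
  rw [← symmetrizedMomentMatrix_sum_smul_kronecker Finset.univ p (fun h => (hρh h).isHermitian)
    (fun h => (hσh h).isHermitian)] at hsum
  exact hsum
end
end
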